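/- Let π be the bivector field on ℝ^6 given by π = −2x3 ∂x2∧∂x1 − 2x2 ∂x3∧∂x1 + (4x1³+2t1x1+t2) ∂x3∧∂x2 (the swallowtail model). Then π is a Poisson bivector. -/

import Mathlib

/-- Partial derivative in the `i`-th coordinate direction on `ℝ⁶`. -/
noncomputable def pd (i : Fin 6) (g : (Fin 6 → ℝ) → ℝ) (p : Fin 6 → ℝ) : ℝ :=
  fderiv ℝ g p (Pi.single i 1)

@[fun_prop] lemma contDiff_pd (j : Fin 6) {f : (Fin 6 → ℝ) → ℝ} (hf : ContDiff ℝ (⊤ : ℕ∞) f) :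
    ContDiff ℝ (⊤ : ℕ∞) (pd j f) :=
  (hf.fderiv_right (by simp)).clm_apply contDiff_const

lemma pd_mul {f g : (Fin 6 → ℝ) → ℝ} {p : Fin 6 → ℝ} (j : Fin 6)
    (hf : DifferentiableAt ℝ f p) (hg : DifferentiableAt ℝ g p) :
    pd j (fun q => f q * g q) p = pd j f p * g p + f p * pd j g p := by
  simp [pd, fderiv_fun_mul hf hg]; ring

lemma pd_add {f g : (Fin 6 → ℝ) → ℝ} {p : Fin 6 → ℝ} (j : Fin 6)
    (hf : DifferentiableAt ℝ f p) (hg : DifferentiableAt ℝ g p) :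
    pd j (fun q => f q + g q) p = pd j f p + pd j g p := by
  simp [pd, fderiv_fun_add hf hg]

lemma pd_sub {f g : (Fin 6 → ℝ) → ℝ} {p : Fin 6 → ℝ} (j : Fin 6)
    (hf : DifferentiableAt ℝ f p) (hg : DifferentiableAt ℝ g p) :
    pd j (fun q => f q - g q) p = pd j f p - pd j g p := by
  simp [pd, fderiv_fun_sub hf hg]

lemma pd_coord (i j : Fin 6) (p : Fin 6 → ℝ) :
    pd j (fun q => q i) p = if j = i then 1 else 0 := by
  have : (fun q : Fin 6 → ℝ => q i) = (ContinuousLinearMap.proj i : (Fin 6 → ℝ) →L[ℝ] ℝ) := rfl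
  rw [pd, this, ContinuousLinearMap.fderiv]
  simp [Pi.single_apply, eq_comm]

noncomputable def pd2 (i j : Fin 6) (f : (Fin 6 → ℝ) → ℝ) (p : Fin 6 → ℝ) : ℝ :=
  pd i (pd j f) p

lemma pd2_eq {f : (Fin 6 → ℝ) → ℝ} (hf : ContDiff ℝ (⊤ : ℕ∞) f) (i j : Fin 6) (p : Fin 6 → ℝ) :
    pd2 i j f p = fderiv ℝ (fderiv ℝ f) p (Pi.single i 1) (Pi.single j 1) := by
  have hd : DifferentiableAt ℝ (fderiv ℝ f) p :=
    ((hf.fderiv_right (m := (⊤ : ℕ∞)) (by simp)).differentiable (by simp)).differentiableAt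
  have h2 := fderiv_clm_apply (c := fderiv ℝ f) (u := fun _ : Fin 6 → ℝ => (Pi.single j 1 : Fin 6 → ℝ))
    hd (differentiableAt_const _)
  have h1 : pd2 i j f p
      = fderiv ℝ (fun q => (fderiv ℝ f q) ((fun _ : Fin 6 → ℝ => (Pi.single j 1 : Fin 6 → ℝ)) q)) p
        (Pi.single i 1) := rfl
  rw [h1, h2]
  simp

lemma pd2_symm {f : (Fin 6 → ℝ) → ℝ} (hf : ContDiff ℝ (⊤ : ℕ∞) f) (i j : Fin 6) (p : Fin 6 → ℝ) :
    pd2 i j f p = pd2 j i f p := by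
  rw [pd2_eq hf, pd2_eq hf]
  exact (hf.contDiffAt.isSymmSndFDerivAt (by rw [minSmoothness_of_isRCLikeNormedField]; exact WithTop.coe_le_coe.mpr le_top)) _ _


/-- Coordinates: `p 0, p 1, p 2` are `t1, t2, t3` and `p 3, p 4, p 5` are `x1, x2, x3`.
The swallowtail bivector `π = −2x3 ∂x2∧∂x1 − 2x2 ∂x3∧∂x1 + (4x1³+2t1x1+t2) ∂x3∧∂x2`. -/
noncomputable def piv (p : Fin 6 → ℝ) : Fin 6 → Fin 6 → ℝ := fun i j =>
  if i = 4 ∧ j = 3 then -(2 * p 5)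
  else if i = 3 ∧ j = 4 then -(-(2 * p 5))
  else if i = 5 ∧ j = 3 then -(2 * p 4)
  else if i = 3 ∧ j = 5 then -(-(2 * p 4))
  else if i = 5 ∧ j = 4 then 4 * (p 3) ^ 3 + 2 * p 0 * p 3 + p 1
  else if i = 4 ∧ j = 5 then -(4 * (p 3) ^ 3 + 2 * p 0 * p 3 + p 1)
  else 0

/-- The bracket `{g,h} = π(dg,dh)` induced by the bivector `π`. -/
noncomputable def bracket (g h : (Fin 6 → ℝ) → ℝ) (p : Fin 6 → ℝ) : ℝ :=
  ∑ i, ∑ j, piv p i j * pd i g p * pd j h p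

lemma bracket_eq (h k : (Fin 6 → ℝ) → ℝ) (p : Fin 6 → ℝ) :
    bracket h k p =
      (2 * p 5) * (pd 3 h p * pd 4 k p - pd 4 h p * pd 3 k p)
      + ((2 * p 4) * (pd 3 h p * pd 5 k p - pd 5 h p * pd 3 k p)
      + (4 * p 3 ^ 3 + 2 * p 0 * p 3 + p 1) * (pd 5 h p * pd 4 k p - pd 4 h p * pd 5 k p)) := by
  simp [bracket, piv, Fin.sum_univ_six]
  ring

@[fun_prop] lemma diff_pd {f : (Fin 6 → ℝ) → ℝ} (hf : ContDiff ℝ (⊤ : ℕ∞) f) (a : Fin 6) (p : Fin 6 → ℝ) :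
    DifferentiableAt ℝ (pd a f) p :=
  ((contDiff_pd a hf).differentiable (by simp)).differentiableAt

lemma diff_coord (i : Fin 6) (p : Fin 6 → ℝ) :
    DifferentiableAt ℝ (fun q : Fin 6 → ℝ => q i) p :=
  (ContinuousLinearMap.proj i : (Fin 6 → ℝ) →L[ℝ] ℝ).differentiableAt

lemma pd_const_mul (c : ℝ) {f : (Fin 6 → ℝ) → ℝ} {p : Fin 6 → ℝ} (j : Fin 6)
    (hf : DifferentiableAt ℝ f p) :
    pd j (fun q => c * f q) p = c * pd j f p := by
  simp [pd, fderiv_const_mul hf c]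

/-- derivative of the coefficient `q ↦ 2 * q i`. -/
lemma pd_two_coord (i j : Fin 6) (p : Fin 6 → ℝ) :
    pd j (fun q : Fin 6 → ℝ => 2 * q i) p = 2 * (if j = i then 1 else 0) := by
  rw [pd_const_mul 2 j (diff_coord i p), pd_coord]

/-- derivative of `F q = 4 q3³ + 2 q0 q3 + q1`. -/
lemma pd_F (j : Fin 6) (p : Fin 6 → ℝ) :
    pd j (fun q : Fin 6 → ℝ => 4 * q 3 ^ 3 + 2 * q 0 * q 3 + q 1) p
      = (12 * p 3 ^ 2 + 2 * p 0) * (if j = 3 then 1 else 0)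
        + 2 * p 3 * (if j = 0 then 1 else 0) + (if j = 1 then 1 else 0) := by
  have d3 := diff_coord 3 p
  have d0 := diff_coord 0 p
  have e1 : (fun q : Fin 6 → ℝ => 4 * q 3 ^ 3 + 2 * q 0 * q 3 + q 1)
      = fun q : Fin 6 → ℝ =>
        (fun q : Fin 6 → ℝ => 4 * (q 3 * (q 3 * q 3)) + (2 * q 0) * q 3) q
        + (fun q : Fin 6 → ℝ => q 1) q := by
    funext q; ring
  rw [e1, pd_add j (by fun_prop) (diff_coord 1 p)]
  have e2 : (fun q : Fin 6 → ℝ => 4 * (q 3 * (q 3 * q 3)) + (2 * q 0) * q 3)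
      = fun q : Fin 6 → ℝ =>
        (fun q : Fin 6 → ℝ => 4 * (q 3 * (q 3 * q 3))) q
        + (fun q : Fin 6 → ℝ => (2 * q 0) * q 3) q := rfl
  rw [e2, pd_add j (by fun_prop) (by fun_prop),
    pd_const_mul 4 j (by fun_prop),
    pd_mul j d3 (by fun_prop), pd_mul j d3 d3,
    pd_mul j (by fun_prop) d3, pd_const_mul 2 j d0, pd_coord, pd_coord, pd_coord]
  ring

lemma pd_pd_symm {f : (Fin 6 → ℝ) → ℝ} (hf : ContDiff ℝ (⊤ : ℕ∞) f) (i j : Fin 6) (p : Fin 6 → ℝ) :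
    pd i (pd j f) p = pd j (pd i f) p := pd2_symm hf i j p

lemma pd_term {c a b d e : (Fin 6 → ℝ) → ℝ} {p : Fin 6 → ℝ} (j : Fin 6)
    (hc : DifferentiableAt ℝ c p) (ha : DifferentiableAt ℝ a p) (hb : DifferentiableAt ℝ b p)
    (hd : DifferentiableAt ℝ d p) (he : DifferentiableAt ℝ e p) :
    pd j (fun q => c q * (a q * b q - d q * e q)) p =
      pd j c p * (a p * b p - d p * e p)
      + c p * ((pd j a p * b p + a p * pd j b p) - (pd j d p * e p + d p * pd j e p)) := by
  rw [pd_mul (g := fun q => a q * b q - d q * e q) j hc ((ha.mul hb).sub (hd.mul he)),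
    pd_sub (f := fun q => a q * b q) (g := fun q => d q * e q) j (ha.mul hb) (hd.mul he),
    pd_mul j ha hb, pd_mul j hd he]

lemma pd_bracket {h k : (Fin 6 → ℝ) → ℝ} (hh : ContDiff ℝ (⊤ : ℕ∞) h) (hk : ContDiff ℝ (⊤ : ℕ∞) k)
    (j : Fin 6) (p : Fin 6 → ℝ) :
    pd j (bracket h k) p =
      2 * (if j = 5 then 1 else 0) * (pd 3 h p * pd 4 k p - pd 4 h p * pd 3 k p)
      + 2 * p 5 * ((pd j (pd 3 h) p * pd 4 k p + pd 3 h p * pd j (pd 4 k) p)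
                   - (pd j (pd 4 h) p * pd 3 k p + pd 4 h p * pd j (pd 3 k) p))
      + (2 * (if j = 4 then 1 else 0) * (pd 3 h p * pd 5 k p - pd 5 h p * pd 3 k p)
      + 2 * p 4 * ((pd j (pd 3 h) p * pd 5 k p + pd 3 h p * pd j (pd 5 k) p)
                   - (pd j (pd 5 h) p * pd 3 k p + pd 5 h p * pd j (pd 3 k) p))
      + (((12 * p 3 ^ 2 + 2 * p 0) * (if j = 3 then 1 else 0)
          + 2 * p 3 * (if j = 0 then 1 else 0) + (if j = 1 then 1 else 0))
            * (pd 5 h p * pd 4 k p - pd 4 h p * pd 5 k p)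
      + (4 * p 3 ^ 3 + 2 * p 0 * p 3 + p 1)
          * ((pd j (pd 5 h) p * pd 4 k p + pd 5 h p * pd j (pd 4 k) p)
             - (pd j (pd 4 h) p * pd 5 k p + pd 4 h p * pd j (pd 5 k) p)))) := by
  have hfun : bracket h k = fun q =>
      (2 * q 5) * (pd 3 h q * pd 4 k q - pd 4 h q * pd 3 k q)
      + ((2 * q 4) * (pd 3 h q * pd 5 k q - pd 5 h q * pd 3 k q)
      + (4 * q 3 ^ 3 + 2 * q 0 * q 3 + q 1) * (pd 5 h q * pd 4 k q - pd 4 h q * pd 5 k q)) :=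
    funext fun q => bracket_eq h k q
  rw [hfun, pd_add j (by fun_prop) (by fun_prop), pd_add j (by fun_prop) (by fun_prop),
    pd_term j (by fun_prop) (diff_pd hh 3 p) (diff_pd hk 4 p) (diff_pd hh 4 p) (diff_pd hk 3 p),
    pd_term j (by fun_prop) (diff_pd hh 3 p) (diff_pd hk 5 p) (diff_pd hh 5 p) (diff_pd hk 3 p),
    pd_term j (by fun_prop) (diff_pd hh 5 p) (diff_pd hk 4 p) (diff_pd hh 4 p) (diff_pd hk 5 p),
    pd_two_coord, pd_two_coord, pd_F]


set_option maxHeartbeats 2000000 in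
/-- The bivector satisfies the Jacobi identity, i.e. it is Poisson. -/
theorem swallowtail_bivector_is_poisson :
    ∀ g h k : (Fin 6 → ℝ) → ℝ, ContDiff ℝ (⊤ : ℕ∞) g → ContDiff ℝ (⊤ : ℕ∞) h → ContDiff ℝ (⊤ : ℕ∞) k →
    ∀ p : Fin 6 → ℝ,
      bracket g (bracket h k) p + bracket h (bracket k g) p
        + bracket k (bracket g h) p = 0 := by
  intro g h k hg hh hk p
  rw [bracket_eq g (bracket h k) p, bracket_eq h (bracket k g) p, bracket_eq k (bracket g h) p,
    pd_bracket hh hk 3 p, pd_bracket hh hk 4 p, pd_bracket hh hk 5 p,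
    pd_bracket hk hg 3 p, pd_bracket hk hg 4 p, pd_bracket hk hg 5 p,
    pd_bracket hg hh 3 p, pd_bracket hg hh 4 p, pd_bracket hg hh 5 p]
  simp only [Fin.reduceEq, reduceIte, mul_zero, zero_mul, mul_one, add_zero, zero_add, mul_neg, neg_mul, sub_zero, zero_sub]
  simp only [pd_pd_symm hg 4 3 p, pd_pd_symm hg 5 3 p, pd_pd_symm hg 5 4 p,
    pd_pd_symm hh 4 3 p, pd_pd_symm hh 5 3 p, pd_pd_symm hh 5 4 p,
    pd_pd_symm hk 4 3 p, pd_pd_symm hk 5 3 p, pd_pd_symm hk 5 4 p]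
  ring
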